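/- arXiv:1911.11426 — 2 statements merged into one kernel-verified Lean document; each statement's English description precedes it below -/
import Mathlib

section
/- Let A = (a_ij) be an n×n real matrix that is positively stable (all eigenvalues have positive real part), and suppose there exist positive reals π₁,...,π_n with π_i a_ij = π_j a_ji for all i,j. Then the matrix B = (π_i a_ij) is symmetric and positive definite. -/
/-!
With `s i = √(π i)` and `S = diag s`, the detailed-balance matrix is `B = S S A`, and
`C = S⁻¹ B S⁻¹ = S A S⁻¹` is at once symmetric and similar to `A`. Its eigenvalues are therefore
real points of the spectrum of `A`, hence positive, so `C` is positive definite, and so is its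
congruent `B = S C S`.
-/

open Matrix

namespace Matrix

variable {ι : Type*} [Fintype ι] [DecidableEq ι]

lemma ofReal_mem_spectrum_map_ofReal {M : Matrix ι ι ℝ} {μ : ℝ} (h : μ ∈ spectrum ℝ M) :
    (μ : ℂ) ∈ spectrum ℂ (M.map Complex.ofReal) := by
  rw [mem_spectrum_iff_isRoot_charpoly] at h ⊢
  exact charpoly_map M Complex.ofRealHom ▸ h.map

lemma IsHermitian.posDef_of_eq_star_mul_self_mul {A B : Matrix ι ι ℝ} (hB : B.IsHermitian)
    (u : (Matrix ι ι ℝ)ˣ) (hBA : B = star (u : Matrix ι ι ℝ) * u * A)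
    (hA : ∀ μ ∈ spectrum ℝ A, 0 < μ) : B.PosDef := by
  set U : Matrix ι ι ℝ := ↑u
  set V : Matrix ι ι ℝ := ↑u⁻¹
  set C := star V * B * V
  have hC : C.IsHermitian := isHermitian_conjTranspose_mul_mul _ hB
  have hCA : C = U * A * V := by
    simp only [C, hBA, ← mul_assoc, ← star_mul, U, V, u.mul_inv, star_one, one_mul]
  have hC_spec : spectrum ℝ C = spectrum ℝ A := hCA ▸ spectrum.units_conjugate
  have hC_pos : C.PosDef := hC.posDef_iff_eigenvalues_pos.mpr fun i =>
    hA _ (hC_spec ▸ hC.eigenvalues_mem_spectrum_real i)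
  have hBC : B = star U * C * U := by
    simp only [C, ← mul_assoc, ← star_mul, U, V, u.inv_mul, star_one, one_mul]
    simp only [mul_assoc, u.inv_mul, mul_one]
  exact hBC ▸ (IsUnit.posDef_star_left_conjugate_iff u.isUnit).mpr hC_pos

end Matrix

theorem detailed_balance_posdef
    {n : ℕ} (A : Matrix (Fin n) (Fin n) ℝ)
    (hstable : ∀ μ ∈ spectrum ℂ (A.map (Complex.ofReal)), 0 < μ.re)
    (π : Fin n → ℝ) (hπ : ∀ i, 0 < π i)
    (hdb : ∀ i j, π i * A i j = π j * A j i) :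
    (Matrix.of fun i j => π i * A i j).PosDef := by
  have hA : ∀ μ ∈ spectrum ℝ A, 0 < μ := fun μ hμ => by
    simpa using hstable _ (ofReal_mem_spectrum_map_ofReal hμ)
  have hB : (Matrix.of fun i j => π i * A i j).IsHermitian := by
    ext i j
    exact hdb j i
  set s : Fin n → ℝ := fun i => √(π i)
  have hs : IsUnit (diagonal s) :=
    isUnit_diagonal.mpr (Pi.isUnit_iff.mpr fun i => (Real.sqrt_pos.mpr (hπ i)).ne'.isUnit)
  refine hB.posDef_of_eq_star_mul_self_mul hs.unit ?_ hA
  rw [IsUnit.unit_spec, star_eq_conjTranspose, diagonal_conjTranspose, diagonal_mul_diagonal]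
  ext i j
  simp [diagonal_mul, s, Real.mul_self_sqrt (hπ i).le]
end

section
/- Minimum principle for the discrete scheme (nonnegativity): let (u_{i,K})_{K∈T} solve m(K)(u_{i,K} − u_{i,K}^{k−1})/Δt − Σ_{σ∈E_K} τ_σ [δ D_{K,σ}(u_i) + ū_{i,σ} D_{K,σ}(p_i(u))] = 0 with ū_{i,σ} = min(u_{i,K}⁺, u_{i,K,σ}⁺) ≥ 0, and suppose u_{i,K}^{k−1} ≥ 0 for all K. Then u_{i,K} ≥ 0 for all K. -/
theorem discrete_minimum_principle_nonnegativity
    {n : ℕ} (cells edges : Type*) [Fintype cells] [Fintype edges]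
    (m : cells → ℝ) (hm : ∀ K, 0 < m K)
    (EK : cells → Finset edges) (Eint : Finset edges)
    (cl cr cext : edges → cells)
    (hclcr : ∀ σ ∈ Eint, cl σ ≠ cr σ)
    (hmem : ∀ (K : cells) (σ : edges), σ ∈ EK K ↔
      ((σ ∈ Eint ∧ (K = cl σ ∨ K = cr σ)) ∨ (σ ∉ Eint ∧ K = cext σ)))
    (τ : edges → ℝ) (hτ : ∀ σ, 0 < τ σ)
    (nb : (cells → ℝ) → cells → edges → ℝ)
    (hnb : ∀ (v : cells → ℝ) (σ : edges), σ ∈ Eint →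
      nb v (cl σ) σ = v (cr σ) ∧ nb v (cr σ) σ = v (cl σ))
    (hnbext : ∀ (v : cells → ℝ) (K : cells) (σ : edges), σ ∉ Eint → nb v K σ = v K)
    (a : Matrix (Fin n) (Fin n) ℝ) (ha : ∀ i j, 0 < a i j)
    (δ Δt : ℝ) (hδ : 0 < δ) (hΔt : 0 < Δt)
    (uprev u : Fin n → cells → ℝ)
    (hprev : ∀ (i : Fin n) (K : cells), 0 ≤ uprev i K)
    (hscheme : ∀ (i : Fin n) (K : cells),
      m K * (u i K - uprev i K) / Δt -
        ∑ σ ∈ EK K, τ σ *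
          (δ * (nb (u i) K σ - u i K) +
            min (max (u i K) 0) (max (nb (u i) K σ) 0) *
              (nb (fun L => ∑ j, a i j * u j L) K σ - ∑ j, a i j * u j K)) = 0) :
    ∀ (i : Fin n) (K : cells), 0 ≤ u i K := by

  intro i K
  by_contra h
  push_neg at h
  have hne : (Finset.univ : Finset cells).Nonempty := ⟨K, Finset.mem_univ K⟩
  obtain ⟨K₀, -, hmin⟩ := Finset.exists_min_image Finset.univ (u i) hne
  have hK0 : u i K₀ < 0 := lt_of_le_of_lt (hmin K (Finset.mem_univ K)) h
  have hnbge : ∀ σ ∈ EK K₀, u i K₀ ≤ nb (u i) K₀ σ := by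
    intro σ hσ
    rcases (hmem K₀ σ).mp hσ with ⟨hσi, hK⟩ | ⟨hσe, rfl⟩
    · rcases hK with hK | hK
      · rw [hK, (hnb (u i) σ hσi).1, ← hK]; exact hmin _ (Finset.mem_univ _)
      · rw [hK, (hnb (u i) σ hσi).2, ← hK]; exact hmin _ (Finset.mem_univ _)
    · rw [hnbext (u i) _ σ hσe]
  have hzero : max (u i K₀) 0 = 0 := max_eq_right hK0.le
  have hsum : 0 ≤ ∑ σ ∈ EK K₀, τ σ *
      (δ * (nb (u i) K₀ σ - u i K₀) +
        min (max (u i K₀) 0) (max (nb (u i) K₀ σ) 0) *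
          (nb (fun L => ∑ j, a i j * u j L) K₀ σ - ∑ j, a i j * u j K₀)) := by
    apply Finset.sum_nonneg
    intro σ hσ
    have h1 : min (max (u i K₀) 0) (max (nb (u i) K₀ σ) 0) = 0 := by
      rw [hzero]; exact min_eq_left (le_max_right _ _)
    rw [h1, zero_mul, add_zero]
    exact mul_nonneg (hτ σ).le (mul_nonneg hδ.le (sub_nonneg.mpr (hnbge σ hσ)))
  have heq := hscheme i K₀
  have h2 : 0 ≤ m K₀ * (u i K₀ - uprev i K₀) / Δt := by linarith
  rw [div_nonneg_iff] at h2
  rcases h2 with ⟨h2, -⟩ | ⟨-, h2⟩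
  · nlinarith [hm K₀, hprev i K₀, mul_pos (hm K₀)
      (show (0:ℝ) < uprev i K₀ - u i K₀ by have := hprev i K₀; linarith)]
  · linarith
end
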